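/- arXiv:2001.00251 — 6 statements merged into one kernel-verified Lean document; each statement's English description precedes it below -/
import Mathlib

section
/- If the Laplacian matrix of a weighted graph G on n vertices is diagonalisable by some complex Hadamard matrix, then G is weighted-regular, i.e., all diagonal entries of L(G) are equal. -/
open Matrix Complex

/-- `H` is a complex Hadamard matrix: unimodular entries and `H Hᴴ = n I`. -/
def IsCHadamard {I : Type*} [Fintype I] [DecidableEq I] (H : Matrix I I ℂ) : Prop :=
  (∀ i j, ‖H i j‖ = 1) ∧
    H * Hᴴ = (Fintype.card I : ℂ) • (1 : Matrix I I ℂ)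

/-- `M` is diagonalised by `H`: every column of `H` is an eigenvector of `M`. -/
def DiagBy {I : Type*} [Fintype I] (M H : Matrix I I ℂ) : Prop :=
  ∀ j : I, ∃ μ : ℂ, M.mulVec (fun i => H i j) = μ • (fun i => H i j)

/-- The Laplacian of a weighted graph given by its weighted adjacency matrix. -/
def lapOf {n : ℕ} (A : Matrix (Fin n) (Fin n) ℝ) : Matrix (Fin n) (Fin n) ℝ :=
  Matrix.diagonal (fun i => ∑ j, A i j) - A

/-!
Write `M H = H D` with `D = diag μ` the eigenvalues of the columns of `H`. Since `H Hᴴ = n I`,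
this gives `n M = H D Hᴴ`, whose `(a, a)` entry is `∑ j, μ j |H a j|² = ∑ j, μ j` because the
entries of `H` are unimodular. So every diagonal entry of `M` equals `(∑ j, μ j) / n`.
-/

variable {I : Type*} [Fintype I] [DecidableEq I]

theorem DiagBy.exists_mul_eq_mul_diagonal {M H : Matrix I I ℂ} (h : DiagBy M H) :
    ∃ μ : I → ℂ, M * H = H * diagonal μ := by
  choose μ hμ using h
  refine ⟨μ, ?_⟩
  ext a b
  rw [mul_diagonal, mul_comm]
  exact congrFun (hμ b) a

namespace IsCHadamard

theorem mul_star_self {H : Matrix I I ℂ} (hH : IsCHadamard H) (i j : I) :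
    H i j * star (H i j) = 1 := by
  rw [RCLike.star_def, RCLike.mul_conj, hH.1 i j]
  norm_num

theorem card_smul_eq_conj {M H : Matrix I I ℂ} (hH : IsCHadamard H) {μ : I → ℂ}
    (hμ : M * H = H * diagonal μ) :
    (Fintype.card I : ℂ) • M = H * diagonal μ * Hᴴ := by
  rw [← hμ, Matrix.mul_assoc, hH.2, Matrix.mul_smul, Matrix.mul_one]

theorem diag_conj_diagonal {H : Matrix I I ℂ} (hH : IsCHadamard H) (μ : I → ℂ) (a : I) :
    (H * diagonal μ * Hᴴ) a a = ∑ j, μ j := by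
  rw [mul_apply]
  refine Finset.sum_congr rfl fun j _ => ?_
  rw [mul_diagonal, conjTranspose_apply, mul_right_comm, hH.mul_star_self, one_mul]

theorem diag_eq_of_diagBy {M H : Matrix I I ℂ} (hH : IsCHadamard H) (hM : DiagBy M H)
    (a b : I) : M a a = M b b := by
  obtain ⟨μ, hμ⟩ := hM.exists_mul_eq_mul_diagonal
  have hdiag (c : I) : (Fintype.card I : ℂ) * M c c = ∑ j, μ j := by
    rw [← hH.diag_conj_diagonal μ c, ← hH.card_smul_eq_conj hμ, Matrix.smul_apply, smul_eq_mul]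
  have hcard : (Fintype.card I : ℂ) ≠ 0 := Nat.cast_ne_zero.mpr (Fintype.card_pos_iff.mpr ⟨a⟩).ne'
  exact mul_left_cancel₀ hcard ((hdiag a).trans (hdiag b).symm)

end IsCHadamard

theorem stmt0_general {n : ℕ} (A : Matrix (Fin n) (Fin n) ℝ)
    (H : Matrix (Fin n) (Fin n) ℂ) (hH : IsCHadamard H)
    (hdiagby : DiagBy ((lapOf A).map (Complex.ofReal)) H) :
    ∀ i i' : Fin n, (lapOf A) i i = (lapOf A) i' i' := fun i i' =>
  Complex.ofReal_injective (hH.diag_eq_of_diagBy hdiagby i i')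

/-- If the Laplacian of a weighted graph is diagonalisable by a complex Hadamard
matrix, then the graph is weighted-regular. -/
theorem stmt0 {n : ℕ} (A : Matrix (Fin n) (Fin n) ℝ)
    (hsymm : A.IsSymm) (hnonneg : ∀ i j, 0 ≤ A i j) (hdiag : ∀ i, A i i = 0)
    (H : Matrix (Fin n) (Fin n) ℂ) (hH : IsCHadamard H)
    (hdiagby : DiagBy ((lapOf A).map (Complex.ofReal)) H) :
    ∀ i i' : Fin n, (lapOf A) i i = (lapOf A) i' i' :=
  stmt0_general A H hH hdiagby
end

section
/- If the adjacency matrix of a weighted graph G (symmetric, entrywise nonnegative, zero diagonal) is diagonalisable by some complex Hadamard matrix, then G is weighted-regular: all row sums of the adjacency matrix are equal. -/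
open Matrix Complex

/-!
Write `r i` for the row sums of `A` and `n` for its size. If a column `h` of `H` satisfies
`A h = μ h`, then `|hᵢ| = 1` and `A ≥ 0` give `|μ| ≤ r i` for every `i`. Expanding the all-ones
vector in the orthogonal basis formed by the columns of `H`, with coefficients `c = Hᴴ 1 / n` and
`∑ |cₖ|² = 1` by Parseval, turns `∑ᵢ rᵢ = 1ᵀ A 1` into `n ∑ₖ |cₖ|² μₖ`: `n` times a convex
combination of eigenvalues. So the average row sum is at most every row sum, and all are equal.
-/

variable {ι : Type*} [Fintype ι]

theorem norm_le_sum_row_of_mulVec_eq_smul {A : Matrix ι ι ℝ} (hA : ∀ i j, 0 ≤ A i j)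
    {v : ι → ℂ} (hv : ∀ i, ‖v i‖ = 1) {μ : ℂ} (hμ : A.map ofReal *ᵥ v = μ • v) (i : ι) :
    ‖μ‖ ≤ ∑ j, A i j :=
  calc ‖μ‖ = ‖(A.map ofReal *ᵥ v) i‖ := by simp [hμ, hv]
    _ ≤ ∑ j, ‖(A i j : ℂ) * v j‖ := norm_sum_le _ _
    _ = ∑ j, A i j := by simp [hv, abs_of_nonneg (hA i _)]

theorem mul_eq_mul_diagonal_of_mulVec_col [DecidableEq ι] {M H : Matrix ι ι ℂ} {μ : ι → ℂ}
    (hμ : ∀ k, M *ᵥ (fun i => H i k) = μ k • fun i => H i k) :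
    M * H = H * diagonal μ := by
  ext i k
  rw [mul_diagonal, mul_apply]
  simpa [mulVec, dotProduct, mul_comm] using congrFun (hμ k) i

theorem eq_of_sum_le_card_mul {f : ι → ℝ} (h : ∀ i, ∑ j, f j ≤ Fintype.card ι * f i)
    (i i' : ι) : f i = f i' := by
  have hsum : ∑ k, ((Fintype.card ι : ℝ) * f k - ∑ j, f j) = 0 := by
    simp [Finset.sum_sub_distrib, ← Finset.mul_sum]
  have hzero := (Finset.sum_eq_zero_iff_of_nonneg fun k _ => sub_nonneg.2 (h k)).1 hsum
  have hcard : (Fintype.card ι : ℝ) ≠ 0 := by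
    have : Nonempty ι := ⟨i⟩
    positivity
  refine mul_left_cancel₀ hcard ?_
  linarith [hzero i (Finset.mem_univ _), hzero i' (Finset.mem_univ _)]

theorem exists_sum_entries_eq_card_mul_convex_comb [DecidableEq ι] [Nonempty ι]
    {M H : Matrix ι ι ℂ} (hH : H * Hᴴ = (Fintype.card ι : ℂ) • 1) {μ : ι → ℂ}
    (hMH : M * H = H * diagonal μ) :
    ∃ w : ι → ℝ, (∀ k, 0 ≤ w k) ∧ ∑ k, w k = 1 ∧
      ∑ i, ∑ j, M i j = Fintype.card ι * ∑ k, w k * μ k := by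
  set n : ℂ := (Fintype.card ι : ℂ)
  have hn : n ≠ 0 := by simp [n]
  set c : ι → ℂ := n⁻¹ • (Hᴴ *ᵥ 1)
  have hHc : H *ᵥ c = 1 := by
    rw [mulVec_smul, mulVec_mulVec, hH, smul_mulVec, one_mulVec, smul_smul, inv_mul_cancel₀ hn,
      one_smul]
  have hrow : 1 ᵥ* H = n • star c := by
    have hn_star : star n = n := by simp [n]
    rw [star_smul, star_mulVec, conjTranspose_conjTranspose, star_one, star_inv₀, hn_star,
      smul_smul, mul_inv_cancel₀ hn, one_smul]
  have hpair : ∀ v, 1 ⬝ᵥ (H *ᵥ v) = n * (star c ⬝ᵥ v) := by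
    intro v
    rw [dotProduct_mulVec, hrow, smul_dotProduct, smul_eq_mul]
  refine ⟨fun k => normSq (c k), fun k => normSq_nonneg _, ?_, ?_⟩
  · have hcc : star c ⬝ᵥ c = 1 := by
      refine mul_left_cancel₀ hn ?_
      rw [← hpair, hHc, mul_one]
      simp [n]
    have : star c ⬝ᵥ c = ∑ k, (normSq (c k) : ℂ) := by
      simp [dotProduct, ← mul_conj, mul_comm]
    exact_mod_cast this ▸ hcc
  · calc ∑ i, ∑ j, M i j = 1 ⬝ᵥ (M *ᵥ (H *ᵥ c)) := by rw [hHc]; simp [dotProduct, mulVec]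
      _ = 1 ⬝ᵥ (H *ᵥ (diagonal μ *ᵥ c)) := by rw [mulVec_mulVec, hMH, ← mulVec_mulVec]
      _ = n * ∑ k, (normSq (c k) : ℂ) * μ k := by
        rw [hpair]
        congr 1
        refine Finset.sum_congr rfl fun k _ => ?_
        rw [mulVec_diagonal, ← mul_conj, Pi.star_apply, Complex.star_def]
        ring

theorem sum_row_sums_le_card_mul_row_sum [DecidableEq ι] {A : Matrix ι ι ℝ}
    (hA : ∀ i j, 0 ≤ A i j) {H : Matrix ι ι ℂ} (hH : IsCHadamard H)
    (hAH : DiagBy (A.map ofReal) H) (i : ι) :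
    ∑ i', ∑ j, A i' j ≤ Fintype.card ι * ∑ j, A i j := by
  have : Nonempty ι := ⟨i⟩
  choose μ hμ using hAH
  obtain ⟨w, hw0, hw1, hsum⟩ := exists_sum_entries_eq_card_mul_convex_comb hH.2
    (mul_eq_mul_diagonal_of_mulVec_col hμ)
  have hμ_le : ∀ k, (μ k).re ≤ ∑ j, A i j := fun k =>
    (re_le_norm _).trans (norm_le_sum_row_of_mulVec_eq_smul hA (fun j => hH.1 j k) (hμ k) i)
  calc ∑ i', ∑ j, A i' j = Fintype.card ι * ∑ k, w k * (μ k).re := by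
        simpa using congrArg re hsum
    _ ≤ Fintype.card ι * ∑ k, w k * ∑ j, A i j := by gcongr with k; exacts [hw0 k, hμ_le k]
    _ = Fintype.card ι * ∑ j, A i j := by rw [← Finset.sum_mul, hw1, one_mul]

theorem stmt1_general {n : ℕ} (A : Matrix (Fin n) (Fin n) ℝ)
    (hnonneg : ∀ i j, 0 ≤ A i j)
    (H : Matrix (Fin n) (Fin n) ℂ) (hH : IsCHadamard H)
    (hdiagby : DiagBy (A.map (Complex.ofReal)) H) :
    ∀ i i' : Fin n, ∑ j, A i j = ∑ j, A i' j :=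
  eq_of_sum_le_card_mul (sum_row_sums_le_card_mul_row_sum hnonneg hH hdiagby)

/-- If the adjacency matrix of a weighted graph is diagonalisable by a complex
Hadamard matrix, then the graph is weighted-regular (all row sums equal). -/
theorem stmt1 {n : ℕ} (A : Matrix (Fin n) (Fin n) ℝ)
    (hsymm : A.IsSymm) (hnonneg : ∀ i j, 0 ≤ A i j) (hdiag : ∀ i, A i i = 0)
    (H : Matrix (Fin n) (Fin n) ℂ) (hH : IsCHadamard H)
    (hdiagby : DiagBy (A.map (Complex.ofReal)) H) :
    ∀ i i' : Fin n, ∑ j, A i j = ∑ j, A i' j :=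
  stmt1_general A hnonneg H hH hdiagby
end

section
/- Let H be a dephased complex Hadamard matrix of order n (n even) possessing a column h_j ≠ 1 all of whose entries are ±1. Then the matrix (n/2)I + (1/2)(h_j h_j* − J) is the Laplacian matrix of the complete bipartite graph K_{n/2,n/2} (with parts determined by the sign pattern of h_j), and it is diagonalised by H. -/
open Matrix Complex

/-- `H` is dephased: its first row and first column consist of ones. -/
def IsDephased {n : ℕ} [NeZero n] (H : Matrix (Fin n) (Fin n) ℂ) : Prop :=
  (∀ i, H i 0 = 1) ∧ (∀ j, H 0 j = 1)

/-
The matrix is `(n/2) I + (1/2)(h_c h_cᴴ - h_1 h_1ᴴ)`, since the dephased first column is `h_1 = 𝟏`.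
The columns of `H` are pairwise orthogonal of squared length `n`, so each `h_j h_jᴴ` has every
column of `H` as an eigenvector, and so does the combination. Orthogonality of `h_c` to `𝟏` says
that the `±1` entries of `h_c` sum to zero, so exactly half of them are `+1`; the entries of the
matrix are read off from `h_i h_{i'}* = ±1` according as the signs agree.
-/

namespace DiagBy

variable {I : Type*} [Fintype I] {M N H : Matrix I I ℂ}

theorem one [DecidableEq I] (H : Matrix I I ℂ) : DiagBy 1 H :=
  fun _ => ⟨1, by rw [one_mulVec, one_smul]⟩

theorem add (hM : DiagBy M H) (hN : DiagBy N H) : DiagBy (M + N) H := fun j => by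
  obtain ⟨μ, hμ⟩ := hM j
  obtain ⟨ν, hν⟩ := hN j
  exact ⟨μ + ν, by rw [add_mulVec, hμ, hν, add_smul]⟩

theorem sub (hM : DiagBy M H) (hN : DiagBy N H) : DiagBy (M - N) H := fun j => by
  obtain ⟨μ, hμ⟩ := hM j
  obtain ⟨ν, hν⟩ := hN j
  exact ⟨μ - ν, by rw [sub_mulVec, hμ, hν, sub_smul]⟩

theorem smul (a : ℂ) (hM : DiagBy M H) : DiagBy (a • M) H := fun j => by
  obtain ⟨μ, hμ⟩ := hM j
  exact ⟨a * μ, by rw [smul_mulVec, hμ, smul_smul]⟩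

end DiagBy

namespace IsCHadamard

variable {I : Type*} [Fintype I] [DecidableEq I] {H : Matrix I I ℂ}

theorem conjTranspose_mul_self (hH : IsCHadamard H) :
    Hᴴ * H = (Fintype.card I : ℂ) • (1 : Matrix I I ℂ) := by
  cases isEmpty_or_nonempty I
  · exact Subsingleton.elim _ _
  have hn : (Fintype.card I : ℂ) ≠ 0 := Nat.cast_ne_zero.2 Fintype.card_ne_zero
  have hinv : (Fintype.card I : ℂ)⁻¹ • Hᴴ * H = 1 := mul_eq_one_comm.1 <| by
    rw [Matrix.mul_smul, hH.2, smul_smul, inv_mul_cancel₀ hn, one_smul]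
  rw [← hinv, Matrix.smul_mul, smul_smul, mul_inv_cancel₀ hn, one_smul]

theorem star_col_dotProduct_col (hH : IsCHadamard H) (j j' : I) :
    star (fun i => H i j) ⬝ᵥ (fun i => H i j') = if j = j' then (Fintype.card I : ℂ) else 0 := by
  have := congr_fun₂ hH.conjTranspose_mul_self j j'
  rw [mul_apply, Matrix.smul_apply, one_apply] at this
  simpa [dotProduct] using this

theorem diagBy_vecMulVec_col (hH : IsCHadamard H) (c : I) :
    DiagBy (vecMulVec (fun i => H i c) (star fun i => H i c)) H := fun j =>
  ⟨if c = j then (Fintype.card I : ℂ) else 0, by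
    rw [vecMulVec_mulVec, op_smul_eq_smul, hH.star_col_dotProduct_col]
    split_ifs with h
    · rw [h]
    · rw [zero_smul, zero_smul]⟩

end IsCHadamard

open Finset in
theorem two_mul_card_filter_eq_one {I : Type*} [Fintype I] {v : I → ℂ}
    (hv : ∀ i, v i = 1 ∨ v i = -1) (hsum : ∑ i, v i = 0) :
    2 * (univ.filter fun i => v i = 1).card = Fintype.card I := by
  rw [← sum_filter_add_sum_filter_not univ (fun i => v i = 1),
    sum_congr rfl fun i hi => (mem_filter.1 hi).2,
    sum_congr rfl fun i hi => (hv i).resolve_left (mem_filter.1 hi).2] at hsum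
  have hcard : (univ.filter fun i => v i = 1).card = (univ.filter fun i => ¬v i = 1).card := by
    simp only [sum_const, nsmul_eq_mul, mul_one, mul_neg] at hsum
    exact_mod_cast add_neg_eq_zero.1 hsum
  have := card_filter_add_card_filter_not (s := univ) fun i => v i = 1
  rw [card_univ] at this
  omega

theorem mul_star_eq_ite_of_sign {a b : ℂ} (ha : a = 1 ∨ a = -1) (hb : b = 1 ∨ b = -1) :
    a * star b = if a = b then 1 else -1 := by
  rcases ha with rfl | rfl <;> rcases hb with rfl | rfl <;> norm_num

theorem stmt4_general {n : ℕ} [NeZero n]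
    (H : Matrix (Fin n) (Fin n) ℂ) (hH : IsCHadamard H) (hd : IsDephased H)
    (c : Fin n) (hpm : ∀ i, H i c = 1 ∨ H i c = -1)
    (hne : (fun i => H i c) ≠ (fun _ => (1 : ℂ)))
    (M : Matrix (Fin n) (Fin n) ℂ)
    (hM : M = ((n : ℂ) / 2) • (1 : Matrix (Fin n) (Fin n) ℂ) +
        (1 / 2 : ℂ) • (Matrix.vecMulVec (fun i => H i c) (fun i => star (H i c))
          - Matrix.of (fun _ _ => (1 : ℂ)))) :
    (Finset.univ.filter (fun i => H i c = 1)).card = n / 2 ∧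
    (∀ i, M i i = (n : ℂ) / 2) ∧
    (∀ i i', i ≠ i' → M i i' = if H i c = H i' c then 0 else -1) ∧
    DiagBy M H := by
  have hc0 : c ≠ 0 := fun h => hne (funext fun i => h ▸ hd.1 i)
  have hsum : ∑ i, H i c = 0 := by
    simpa [dotProduct, hd.1, hc0.symm] using hH.star_col_dotProduct_col 0 c
  have hJ : Matrix.of (fun _ _ => (1 : ℂ)) = vecMulVec (fun i => H i 0) (star fun i => H i 0) := by
    ext i i'
    simp [vecMulVec_apply, hd.1]
  have hM_apply : ∀ i i', M i i' = (n / 2 : ℂ) * (1 : Matrix (Fin n) (Fin n) ℂ) i i' +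
      ((if H i c = H i' c then 1 else -1) - 1) / 2 := fun i i' => by
    rw [hM, Matrix.add_apply, Matrix.smul_apply, Matrix.smul_apply, Matrix.sub_apply,
      vecMulVec_apply, of_apply, mul_star_eq_ite_of_sign (hpm i) (hpm i'), smul_eq_mul,
      smul_eq_mul]
    ring
  refine ⟨?_, fun i => by simp [hM_apply], fun i i' hii' => ?_, ?_⟩
  · have := two_mul_card_filter_eq_one hpm hsum
    rw [Fintype.card_fin] at this
    omega
  · rw [hM_apply, one_apply_ne hii']
    split_ifs <;> ring
  · rw [hM, hJ]
    exact ((DiagBy.one H).smul _).add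
      (((hH.diagBy_vecMulVec_col c).sub (hH.diagBy_vecMulVec_col 0)).smul _)

/-- If a dephased complex Hadamard matrix `H` of even order `n` has a column
`h_c ≠ 𝟏` all of whose entries are `±1`, then
`(n/2)I + (1/2)(h_c h_c* − J)` is the Laplacian of the complete bipartite
graph `K_{n/2,n/2}` (with parts given by the sign pattern of `h_c`), and it
is diagonalised by `H`. -/
theorem stmt4 {n : ℕ} [NeZero n] (hn : Even n)
    (H : Matrix (Fin n) (Fin n) ℂ) (hH : IsCHadamard H) (hd : IsDephased H)
    (c : Fin n) (hpm : ∀ i, H i c = 1 ∨ H i c = -1)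
    (hne : (fun i => H i c) ≠ (fun _ => (1 : ℂ)))
    (M : Matrix (Fin n) (Fin n) ℂ)
    (hM : M = ((n : ℂ) / 2) • (1 : Matrix (Fin n) (Fin n) ℂ) +
        (1 / 2 : ℂ) • (Matrix.vecMulVec (fun i => H i c) (fun i => star (H i c))
          - Matrix.of (fun _ _ => (1 : ℂ)))) :
    (Finset.univ.filter (fun i => H i c = 1)).card = n / 2 ∧
    (∀ i, M i i = (n : ℂ) / 2) ∧
    (∀ i i', i ≠ i' → M i i' = if H i c = H i' c then 0 else -1) ∧
    DiagBy M H :=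
  stmt4_general H hH hd c hpm hne M hM
end

section
/- If A(G1) and A(G2) are adjacency matrices of weighted graphs on the same number n of vertices, each diagonalised by a complex Hadamard matrix H, then the block matrix [[w1 A(G1), w2 A(G2)],[w2 A(G2), w1 A(G1)]] (the merge of G1 and G2 with weights w1, w2) is diagonalised by the complex Hadamard matrix [[H, H],[H, −H]]. -/
open Matrix Complex

variable {I : Type*} [Fintype I]

theorem IsCHadamard.fromBlocks_neg [DecidableEq I] {H : Matrix I I ℂ} (hH : IsCHadamard H) :
    IsCHadamard (fromBlocks H H H (-H)) := by
  obtain ⟨hnorm, hmul⟩ := hH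
  refine ⟨?_, ?_⟩
  · rintro (i | i) (j | j) <;> simp [hnorm]
  · rw [fromBlocks_conjTranspose, fromBlocks_multiply, Fintype.card_sum, ← fromBlocks_one,
      fromBlocks_smul]
    simp only [conjTranspose_neg, mul_neg, neg_mul, neg_neg, add_neg_cancel, hmul, smul_zero]
    congr 1 <;> push_cast <;> module

theorem DiagBy.smul_s7 {M H : Matrix I I ℂ} (c : ℂ) (hM : DiagBy M H) : DiagBy (c • M) H := by
  intro j
  obtain ⟨μ, hμ⟩ := hM j
  exact ⟨c * μ, by rw [smul_mulVec, hμ, smul_smul]⟩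

/-- Over `[[H, H], [H, -H]]` the columns are `(v, v)` and `(v, -v)` for the columns `v` of `H`;
they are eigenvectors of `[[P, Q], [Q, P]]` with eigenvalues `μ_P + μ_Q` and `μ_P - μ_Q`. -/
theorem DiagBy.fromBlocks_swap {P Q H : Matrix I I ℂ} (hP : DiagBy P H) (hQ : DiagBy Q H) :
    DiagBy (fromBlocks P Q Q P) (fromBlocks H H H (-H)) := by
  rintro (j | j) <;> obtain ⟨μ, hμ⟩ := hP j <;> obtain ⟨ν, hν⟩ := hQ j
  · refine ⟨μ + ν, ?_⟩
    ext (i | i) <;> simp [fromBlocks_mulVec, Function.comp_def, hμ, hν] <;> ring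
  · refine ⟨μ - ν, ?_⟩
    have hcol : (fun i => -H i j) = -(fun i => H i j) := rfl
    ext (i | i) <;> simp [fromBlocks_mulVec, Function.comp_def, hcol, mulVec_neg, hμ, hν] <;> ring

theorem stmt7_general {n : ℕ} (A₁ A₂ : Matrix (Fin n) (Fin n) ℝ)
    (H : Matrix (Fin n) (Fin n) ℂ) (hH : IsCHadamard H)
    (h₁ : DiagBy (A₁.map Complex.ofReal) H)
    (h₂ : DiagBy (A₂.map Complex.ofReal) H)
    (w₁ w₂ : ℝ) :
    IsCHadamard (Matrix.fromBlocks H H H (-H)) ∧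
      DiagBy
        (Matrix.fromBlocks ((w₁ : ℂ) • A₁.map Complex.ofReal)
          ((w₂ : ℂ) • A₂.map Complex.ofReal)
          ((w₂ : ℂ) • A₂.map Complex.ofReal)
          ((w₁ : ℂ) • A₁.map Complex.ofReal))
        (Matrix.fromBlocks H H H (-H)) :=
  ⟨hH.fromBlocks_neg, (h₁.smul_s7 _).fromBlocks_swap (h₂.smul_s7 _)⟩

/-- The merge `[[w1 A1, w2 A2],[w2 A2, w1 A1]]` of two weighted graphs whose
adjacency matrices are diagonalised by `H` is diagonalised by the complex
Hadamard matrix `[[H, H],[H, −H]]`. -/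
theorem stmt7 {n : ℕ} (A₁ A₂ : Matrix (Fin n) (Fin n) ℝ)
    (hs₁ : A₁.IsSymm) (hs₂ : A₂.IsSymm)
    (hn₁ : ∀ i j, 0 ≤ A₁ i j) (hn₂ : ∀ i j, 0 ≤ A₂ i j)
    (hd₁ : ∀ i, A₁ i i = 0) (hd₂ : ∀ i, A₂ i i = 0)
    (H : Matrix (Fin n) (Fin n) ℂ) (hH : IsCHadamard H)
    (h₁ : DiagBy (A₁.map Complex.ofReal) H)
    (h₂ : DiagBy (A₂.map Complex.ofReal) H)
    (w₁ w₂ : ℝ) :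
    IsCHadamard (Matrix.fromBlocks H H H (-H)) ∧
      DiagBy
        (Matrix.fromBlocks ((w₁ : ℂ) • A₁.map Complex.ofReal)
          ((w₂ : ℂ) • A₂.map Complex.ofReal)
          ((w₂ : ℂ) • A₂.map Complex.ofReal)
          ((w₁ : ℂ) • A₁.map Complex.ofReal))
        (Matrix.fromBlocks H H H (-H)) :=
  stmt7_general A₁ A₂ H hH h₁ h₂ w₁ w₂
end

section
/- If the Laplacian of an unweighted graph G is diagonalised by a (real) normalised Hadamard matrix or by a dephased Turyn Hadamard matrix (all entries in {±1, ±i}), then every eigenvalue of L(G) is an even integer. -/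
open Matrix Complex

/- Since `H` is invertible, every eigenvalue of `L(G)` is the eigenvalue `μ` of some column `h`
of `H`. Reading `L h = μ h` in the first row, where `h` is `1`, gives `μ = ∑_{u ∼ 0} (1 - h u)`.
Each summand lies in `{0, 2, 1 - i, 1 + i}`, so its real part plus its imaginary part is `0` or `2`;
as `μ` is real (`L` is Hermitian), `μ = Re μ + Im μ` is an even integer. -/

theorem Matrix.exists_eq_of_mulVec_eq_smul_of_columns {m K : Type*} [Fintype m] [DecidableEq m]
    [Field K] {M P : Matrix m m K} (hP : IsUnit P) {d : m → K}
    (hcol : ∀ j, M *ᵥ (fun i => P i j) = d j • fun i => P i j)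
    {v : m → K} {μ : K} (hv : v ≠ 0) (hMv : M *ᵥ v = μ • v) : ∃ j, μ = d j := by
  have hMP : M * P = P * diagonal d := by
    ext i j
    rw [mul_diagonal]
    simpa [mul_apply, mulVec, dotProduct, mul_comm] using congrFun (hcol j) i
  obtain ⟨c, rfl⟩ := mulVec_surjective_iff_isUnit.mpr hP v
  have hc : diagonal d *ᵥ c = μ • c := by
    apply mulVec_injective_iff_isUnit.mpr hP
    rw [mulVec_mulVec, ← hMP, ← mulVec_mulVec, hMv, mulVec_smul]
  obtain ⟨j, hj⟩ : ∃ j, c j ≠ 0 := by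
    by_contra! h
    exact hv (by rw [show c = 0 from funext h, mulVec_zero])
  have hcj := congrFun hc j
  rw [mulVec_diagonal, Pi.smul_apply, smul_eq_mul] at hcj
  exact ⟨j, (mul_right_cancel₀ hj hcj).symm⟩

theorem IsCHadamard.isUnit {I : Type*} [Fintype I] [DecidableEq I] [Nonempty I]
    {H : Matrix I I ℂ} (hH : IsCHadamard H) : IsUnit H := by
  have hcard : (Fintype.card I : ℂ) ≠ 0 := by exact_mod_cast Fintype.card_ne_zero
  refine (isUnit_iff_isUnit_det H).mpr <|
    isUnit_det_of_right_inverse (B := (Fintype.card I : ℂ)⁻¹ • Hᴴ) ?_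
  rw [Matrix.mul_smul, hH.2, smul_smul, inv_mul_cancel₀ hcard, one_smul]

theorem Matrix.IsHermitian.conj_eq_self_of_mulVec_eq_smul {n 𝕜 : Type*} [Fintype n] [RCLike 𝕜]
    {A : Matrix n n 𝕜} (hA : A.IsHermitian) {v : n → 𝕜} {μ : 𝕜} (hv : v ≠ 0)
    (h : A *ᵥ v = μ • v) : starRingEnd 𝕜 μ = μ := by
  classical
  refine (isSymmetric_toEuclideanLin_iff.mpr hA).conj_eigenvalue_eq_self
    (Module.End.hasEigenvalue_of_hasEigenvector (x := WithLp.toLp 2 v) ⟨?_, ?_⟩)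
  · rw [Module.End.mem_eigenspace_iff]
    exact congrArg (WithLp.toLp 2) h
  · simpa using hv

theorem SimpleGraph.eq_sum_neighborFinset_of_lapMatrix_mulVec_eq_smul {V R : Type*} [Fintype V]
    [DecidableEq V] [Ring R] (G : SimpleGraph V) [DecidableRel G.Adj] {x : V → R} {μ : R}
    (h : G.lapMatrix R *ᵥ x = μ • x) {a : V} (ha : x a = 1) :
    μ = ∑ u ∈ G.neighborFinset a, (1 - x u) := by
  have hrow := congrFun h a
  simp only [lapMatrix_mulVec_apply, Pi.smul_apply, ha, smul_eq_mul, mul_one] at hrow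
  rw [← hrow, Finset.sum_sub_distrib, Finset.sum_const, card_neighborFinset_eq_degree,
    nsmul_eq_mul, mul_one]

theorem Complex.exists_re_add_im_one_sub_eq_two_mul {z : ℂ}
    (hz : z = 1 ∨ z = -1 ∨ z = I ∨ z = -I) : ∃ m : ℤ, (1 - z).re + (1 - z).im = 2 * m := by
  rcases hz with rfl | rfl | rfl | rfl
  · exact ⟨0, by norm_num⟩
  · exact ⟨1, by norm_num⟩
  · exact ⟨0, by simp⟩
  · exact ⟨1, by norm_num⟩

theorem SimpleGraph.exists_eq_two_mul_of_lapMatrix_mulVec_eq_smul {V : Type*} [Fintype V]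
    [DecidableEq V] (G : SimpleGraph V) [DecidableRel G.Adj] {x : V → ℂ} {μ : ℂ}
    (hx : ∀ u, x u = 1 ∨ x u = -1 ∨ x u = I ∨ x u = -I) {a : V} (ha : x a = 1)
    (h : G.lapMatrix ℂ *ᵥ x = μ • x) : ∃ m : ℤ, μ = 2 * m := by
  have him : μ.im = 0 := conj_eq_iff_im.mp <|
    (G.isHermitian_lapMatrix ℂ).conj_eq_self_of_mulVec_eq_smul (fun h0 => by simp [h0] at ha) h
  have hsum := G.eq_sum_neighborFinset_of_lapMatrix_mulVec_eq_smul h ha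
  choose m hm using fun u => exists_re_add_im_one_sub_eq_two_mul (hx u)
  refine ⟨∑ u ∈ G.neighborFinset a, m u, ?_⟩
  have hre : μ.re = 2 * ∑ u ∈ G.neighborFinset a, (m u : ℝ) := by
    calc μ.re = μ.re + μ.im := by rw [him, add_zero]
      _ = ∑ u ∈ G.neighborFinset a, ((1 - x u).re + (1 - x u).im) := by
        rw [hsum, re_sum, im_sum, Finset.sum_add_distrib]
      _ = 2 * ∑ u ∈ G.neighborFinset a, (m u : ℝ) := by simp only [hm, Finset.mul_sum]
  apply Complex.ext <;> simp [hre, him]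

/-- If the Laplacian of an unweighted graph is diagonalised by a dephased
complex Hadamard matrix all of whose entries lie in `{±1, ±i}` (covering both
normalised real Hadamard and dephased Turyn Hadamard matrices), then every
eigenvalue of the Laplacian is an even integer. -/
theorem stmt10 {n : ℕ} [NeZero n] (G : SimpleGraph (Fin n)) [DecidableRel G.Adj]
    (H : Matrix (Fin n) (Fin n) ℂ) (hH : IsCHadamard H) (hd : IsDephased H)
    (hvals : ∀ i j, H i j = 1 ∨ H i j = -1 ∨ H i j = Complex.I ∨ H i j = -Complex.I)
    (hdiag : DiagBy (G.lapMatrix ℂ) H) :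
    ∀ μ : ℂ, (∃ v : Fin n → ℂ, v ≠ 0 ∧ (G.lapMatrix ℂ).mulVec v = μ • v) →
      ∃ m : ℤ, μ = 2 * m := by
  rintro μ ⟨v, hv, hLv⟩
  choose d hcol using hdiag
  obtain ⟨j, rfl⟩ := Matrix.exists_eq_of_mulVec_eq_smul_of_columns hH.isUnit hcol hv hLv
  exact G.exists_eq_two_mul_of_lapMatrix_mulVec_eq_smul (hvals · j) (hd.2 j) (hcol j)
end

section
/- Let G be an integer-weighted graph whose Laplacian L(G) is diagonalised by a Butson Hadamard matrix in H(2^m, n) for some positive integer m. Then every integer eigenvalue of L(G) is even. -/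
open Matrix Complex

/-- The Laplacian of an integer-weighted graph. -/
def lapOfInt {n : ℕ} (A : Matrix (Fin n) (Fin n) ℤ) : Matrix (Fin n) (Fin n) ℤ :=
  Matrix.diagonal (fun i => ∑ j, A i j) - A

/-!
Since `H` is invertible, an eigenvalue `λ` of `L` is the eigenvalue of some column `h` of `H`;
row `j` of `L h = λ h`, divided by `h j`, gives `λ = ∑ k, L j k * w k` with `2^m`-th roots of
unity `w k` and `∑ k, L j k = 0`. Writing `w k = ζ ^ e k` for a primitive `2^m`-th root `ζ` and
collecting terms, `λ = ∑_{j < 2^m} a j ζ^j` with `∑ a j = 0`. As `ζ ^ 2^(m-1) = -1`, this is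
`∑_{j < 2^(m-1)} (a j - a (2^(m-1) + j)) ζ^j`, and `1, ζ, …, ζ^(2^(m-1)-1)` are linearly
independent over `ℚ` (the cyclotomic polynomial has degree `φ(2^m) = 2^(m-1)`). So the folded
coefficients are `λ` at `j = 0` and `0` elsewhere, whence `λ = ∑_j (a j - a (2^(m-1) + j))`,
which is congruent to `∑ a j = 0` modulo `2`.
-/

open Finset

namespace IsPrimitiveRoot

variable {K : Type*}

lemma pow_two_pow_eq_neg_one [CommRing K] [IsDomain K] {ζ : K} {k : ℕ}
    (hζ : IsPrimitiveRoot ζ (2 ^ (k + 1))) : ζ ^ 2 ^ k = -1 := by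
  have h2 : 2 ^ (k + 1) / 2 ^ k = 2 := by rw [pow_succ, Nat.mul_div_cancel_left _ (by positivity)]
  have hsq := hζ.pow_of_dvd (by positivity) (pow_dvd_pow 2 k.le_succ)
  rw [h2] at hsq
  exact hsq.eq_neg_one_of_two_right

lemma linearIndependent_pow_totient [Field K] [CharZero K] {ζ : K} {n : ℕ}
    (hζ : IsPrimitiveRoot ζ n) (hn : 0 < n) :
    LinearIndependent ℚ fun i : Fin n.totient => ζ ^ (i : ℕ) := by
  have := linearIndependent_pow (K := ℚ) ζ
  rwa [← Polynomial.cyclotomic_eq_minpoly_rat hζ hn, Polynomial.natDegree_cyclotomic] at this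

end IsPrimitiveRoot

lemma sum_range_two_mul_pow_eq_of_pow_eq_neg_one {R : Type*} [CommRing R] {ζ : R} {h : ℕ}
    (hζ : ζ ^ h = -1) (a : ℕ → R) :
    ∑ j ∈ range (2 * h), a j * ζ ^ j = ∑ j ∈ range h, (a j - a (h + j)) * ζ ^ j := by
  rw [two_mul, sum_range_add, ← sum_add_distrib]
  refine sum_congr rfl fun j _ => ?_
  rw [pow_add, hζ]
  ring

lemma LinearIndependent.coeff_eq_of_sum_pow_eq_ratCast {K : Type*} [Field K] [CharZero K]
    {ζ : K} {N : ℕ} (hli : LinearIndependent ℚ fun i : Fin N => ζ ^ (i : ℕ)) {b : ℕ → ℚ} {c : ℚ}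
    (h : ∑ j ∈ range N, (b j : K) * ζ ^ j = c) {j : ℕ} (hj : j < N) :
    b j = if j = 0 then c else 0 := by
  have hvanish : ∑ i : Fin N, (b i - if (i : ℕ) = 0 then c else 0) • ζ ^ (i : ℕ) = 0 := by
    rw [Fin.sum_univ_eq_sum_range (fun i => (b i - if i = 0 then c else 0) • ζ ^ i)]
    simp only [sub_smul, sum_sub_distrib, ite_smul, zero_smul, Rat.smul_def, h,
      sum_ite_eq', mem_range.mpr (j.zero_le.trans_lt hj), if_true, pow_zero, mul_one, sub_self]
  exact sub_eq_zero.mp (Fintype.linearIndependent_iff.mp hli _ hvanish ⟨j, hj⟩)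

namespace IsPrimitiveRoot

variable {K : Type*} [Field K] [CharZero K] {ζ : K} {k : ℕ}

lemma sub_coeff_eq_of_sum_eq_ratCast (hζ : IsPrimitiveRoot ζ (2 ^ (k + 1))) {a : ℕ → ℚ} {c : ℚ}
    (h : ∑ j ∈ range (2 ^ (k + 1)), (a j : K) * ζ ^ j = c) {j : ℕ} (hj : j < 2 ^ k) :
    a j - a (2 ^ k + j) = if j = 0 then c else 0 := by
  have hli := hζ.linearIndependent_pow_totient (by positivity)
  rw [Nat.totient_prime_pow_succ Nat.prime_two, Nat.add_one_sub_one, mul_one] at hli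
  refine hli.coeff_eq_of_sum_pow_eq_ratCast (b := fun j => a j - a (2 ^ k + j)) ?_ hj
  rw [pow_succ', sum_range_two_mul_pow_eq_of_pow_eq_neg_one hζ.pow_two_pow_eq_neg_one] at h
  push_cast
  exact h

lemma even_of_sum_eq_intCast (hζ : IsPrimitiveRoot ζ (2 ^ (k + 1))) {a : ℕ → ℤ} {c : ℤ}
    (hsum : ∑ j ∈ range (2 ^ (k + 1)), a j = 0)
    (h : ∑ j ∈ range (2 ^ (k + 1)), (a j : K) * ζ ^ j = c) : Even c := by
  have hfold (j : ℕ) (hj : j ∈ range (2 ^ k)) :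
      ((a j - a (2 ^ k + j) : ℤ) : ℚ) = if j = 0 then (c : ℚ) else 0 := by
    push_cast
    exact hζ.sub_coeff_eq_of_sum_eq_ratCast (a := fun j => (a j : ℚ)) (c := c)
      (by push_cast; exact h) (mem_range.mp hj)
  have hc : c = ∑ j ∈ range (2 ^ k), (a j - a (2 ^ k + j)) := by
    rw [← Int.cast_inj (α := ℚ), Int.cast_sum, sum_congr rfl hfold, sum_ite_eq',
      if_pos (mem_range.mpr (by positivity))]
  rw [pow_succ', two_mul, sum_range_add] at hsum
  refine ⟨-∑ j ∈ range (2 ^ k), a (2 ^ k + j), ?_⟩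
  rw [hc, sum_sub_distrib]
  linarith

end IsPrimitiveRoot

lemma even_of_eq_sum_mul_two_pow_roots {ι : Type*} [Fintype ι] {k : ℕ} (L : ι → ℤ)
    (hL : ∑ i, L i = 0) (w : ι → ℂ) (hw : ∀ i, w i ^ 2 ^ (k + 1) = 1) {c : ℤ}
    (hc : (c : ℂ) = ∑ i, L i * w i) : Even c := by
  set N := 2 ^ (k + 1)
  have : NeZero N := ⟨by positivity⟩
  have hζ := Complex.isPrimitiveRoot_exp N (NeZero.ne N)
  choose e he hew using fun i => hζ.eq_pow_of_pow_eq_one (hw i)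
  have hmaps : ∀ i ∈ univ, e i ∈ range N := fun i _ => mem_range.mpr (he i)
  refine hζ.even_of_sum_eq_intCast (a := fun j => ∑ i with e i = j, L i)
    ((sum_fiberwise_of_maps_to hmaps L).trans hL) ?_
  rw [hc, ← sum_fiberwise_of_maps_to hmaps]
  push_cast
  refine sum_congr rfl fun j _ => ?_
  rw [sum_mul]
  refine sum_congr rfl fun i hi => ?_
  rw [← hew, (mem_filter.mp hi).2]

lemma IsCHadamard.isUnit_det {I : Type*} [Fintype I] [DecidableEq I] {H : Matrix I I ℂ}
    (hH : IsCHadamard H) : IsUnit H.det := by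
  rcases isEmpty_or_nonempty I with hI | hI
  · simp [det_isEmpty]
  · have hn : (Fintype.card I : ℂ) ≠ 0 := by exact_mod_cast Fintype.card_ne_zero
    refine isUnit_det_of_right_inverse (B := (Fintype.card I : ℂ)⁻¹ • Hᴴ) ?_
    rw [Matrix.mul_smul, hH.2, smul_smul, inv_mul_cancel₀ hn, one_smul]

lemma exists_column_eigenvalue_eq_of_isUnit_det {K ι : Type*} [Field K] [Fintype ι] [DecidableEq ι]
    {M H : Matrix ι ι K} (hH : IsUnit H.det) {μ : ι → K}
    (hμ : ∀ j, M *ᵥ (fun i => H i j) = μ j • fun i => H i j) {v : ι → K} (hv0 : v ≠ 0) {lam : K}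
    (hv : M *ᵥ v = lam • v) : ∃ j, μ j = lam := by
  have hMH : M * H = H * diagonal μ := by
    ext i j
    have hcol := congrFun (hμ j) i
    simp only [mulVec, dotProduct, Pi.smul_apply, smul_eq_mul] at hcol
    rw [mul_apply, mul_diagonal, hcol, mul_comm]
  set c := H⁻¹ *ᵥ v
  have hvc : v = H *ᵥ c := by rw [mulVec_mulVec, mul_nonsing_inv _ hH, one_mulVec]
  have hc : diagonal μ *ᵥ c = lam • c := by
    refine (mulVec_injective_iff_isUnit.mpr ((isUnit_iff_isUnit_det H).mpr hH)) ?_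
    rw [mulVec_mulVec, ← hMH, ← mulVec_mulVec, ← hvc, hv, hvc, mulVec_smul]
  obtain ⟨j, hj⟩ : ∃ j, c j ≠ 0 := by
    by_contra! hzero
    exact hv0 (by rw [hvc, show c = 0 from funext hzero, mulVec_zero])
  refine ⟨j, mul_right_cancel₀ hj ?_⟩
  simpa [mulVec_diagonal] using congrFun hc j

lemma eq_sum_mul_div_of_mulVec_eq_smul {K ι : Type*} [Field K] [Fintype ι] {M : Matrix ι ι K}
    {x : ι → K} {μ : K} (hx : M *ᵥ x = μ • x) {i : ι} (hxi : x i ≠ 0) :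
    μ = ∑ k, M i k * (x k / x i) := by
  have hrow := congrFun hx i
  simp only [mulVec, dotProduct, Pi.smul_apply, smul_eq_mul] at hrow
  simp_rw [mul_div_assoc']
  rw [← sum_div, hrow, mul_div_cancel_right₀ _ hxi]

lemma sum_lapOfInt_apply {n : ℕ} (A : Matrix (Fin n) (Fin n) ℤ) (i : Fin n) :
    ∑ j, lapOfInt A i j = 0 := by
  simp [lapOfInt, Matrix.sub_apply, diagonal_apply, sum_sub_distrib]

theorem stmt14_general {n m : ℕ} (hm : 1 ≤ m) (A : Matrix (Fin n) (Fin n) ℤ)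
    (H : Matrix (Fin n) (Fin n) ℂ) (hH : IsCHadamard H)
    (hroot : ∀ i j, (H i j) ^ (2 ^ m) = 1)
    (hdiagby : DiagBy ((lapOfInt A).map (Int.cast : ℤ → ℂ)) H) :
    ∀ lam : ℤ, (∃ v : Fin n → ℂ, v ≠ 0 ∧
        ((lapOfInt A).map (Int.cast : ℤ → ℂ)).mulVec v = (lam : ℂ) • v) →
      Even lam := by
  rintro lam ⟨v, hv0, hv⟩
  obtain ⟨k, rfl⟩ : ∃ k, m = k + 1 := ⟨m - 1, by omega⟩
  choose μ hμ using hdiagby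
  obtain ⟨j, hj⟩ := exists_column_eigenvalue_eq_of_isUnit_det hH.isUnit_det hμ hv0 hv
  have hjj : H j j ≠ 0 := norm_ne_zero_iff.mp (by rw [hH.1]; exact one_ne_zero)
  refine even_of_eq_sum_mul_two_pow_roots (lapOfInt A j) (sum_lapOfInt_apply A j)
    (fun i => H i j / H j j) (fun i => by rw [div_pow, hroot, hroot, div_one]) ?_
  rw [← hj, eq_sum_mul_div_of_mulVec_eq_smul (hμ j) hjj]
  rfl

/-- If the Laplacian of an integer-weighted graph is diagonalised by a Butson
Hadamard matrix in `H(2^m, n)`, then every integer eigenvalue of the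
Laplacian is even. -/
theorem stmt14 {n m : ℕ} (hm : 1 ≤ m) (A : Matrix (Fin n) (Fin n) ℤ)
    (hsymm : A.IsSymm) (hdiag : ∀ i, A i i = 0)
    (H : Matrix (Fin n) (Fin n) ℂ) (hH : IsCHadamard H)
    (hroot : ∀ i j, (H i j) ^ (2 ^ m) = 1)
    (hdiagby : DiagBy ((lapOfInt A).map (Int.cast : ℤ → ℂ)) H) :
    ∀ lam : ℤ, (∃ v : Fin n → ℂ, v ≠ 0 ∧
        ((lapOfInt A).map (Int.cast : ℤ → ℂ)).mulVec v = (lam : ℂ) • v) →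
      Even lam :=
  stmt14_general hm A H hH hroot hdiagby
end
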